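/- Let G=(V,E) be a mixed graph and A, B, C disjoint subsets of V with M = an(A∪B∪C). Then A ⊥_m B | C in G_M if and only if A* ⊥_m B* | C in G_M, where A* is the set of all vertices v ∈ M\(B∪C) that are connected to A by some path in G_M not intersecting C in the undirected graph obtained by augmenting G_M (adding an undirected edge between any two vertices connected by a pure-collider path with all intermediate vertices in C, then ignoring edge orientations), and B* = M\(C ∪ A*). -/

import Mathlib

structure MixedGraph (V : Type*) where
  dir : V → V → Prop
  bi : V → V → Prop
  bi_symm : ∀ {a b : V}, bi a b → bi b a

namespace MixedGraph

variable {V : Type*}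

/-- A single edge traversal: a directed edge traversed forwards (`a → b`),
a directed edge traversed backwards (`a ← b`), or a bi-directed edge (`a ↔ b`). -/
inductive Step (G : MixedGraph V) : V → V → Type _
  | fwd {a b : V} : G.dir a b → G.Step a b
  | bwd {a b : V} : G.dir b a → G.Step a b
  | bi  {a b : V} : G.bi a b → G.Step a b

/-- The edge has an arrowhead at its second endpoint. -/
def Step.arrowAtEnd {G : MixedGraph V} : {a b : V} → G.Step a b → Prop
  | _, _, .fwd _ => True
  | _, _, .bwd _ => False
  | _, _, .bi _ => True

/-- The edge has an arrowhead at its first endpoint. -/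
def Step.arrowAtStart {G : MixedGraph V} : {a b : V} → G.Step a b → Prop
  | _, _, .fwd _ => False
  | _, _, .bwd _ => True
  | _, _, .bi _ => True

/-- Paths (possibly self-intersecting) in a mixed graph. -/
inductive Walk (G : MixedGraph V) : V → V → Type _
  | nil {a : V} : G.Walk a a
  | cons {a b c : V} : G.Step a b → G.Walk b c → G.Walk a c

namespace Walk

variable {G : MixedGraph V}

def length : {a b : V} → G.Walk a b → ℕ
  | _, _, .nil => 0
  | _, _, .cons _ w => w.length + 1

def verts : {a b : V} → G.Walk a b → List V
  | a, _, .nil => [a]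
  | a, _, .cons _ w => a :: w.verts

/-- The intermediate vertices of a walk. -/
def interm {a b : V} (w : G.Walk a b) : List V := w.verts.tail.dropLast

def append : {a b c : V} → G.Walk a b → G.Walk b c → G.Walk a c
  | _, _, _, .nil, w' => w'
  | _, _, _, .cons s w, w' => .cons s (w.append w')

/-- Every intermediate vertex of the walk is a collider. -/
def IsPureCollider : {a b : V} → G.Walk a b → Prop
  | _, _, .nil => True
  | _, _, .cons _ .nil => True
  | _, _, .cons s (.cons t w) =>
      s.arrowAtEnd ∧ t.arrowAtStart ∧ (Walk.cons t w).IsPureCollider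

/-- The walk is m-connecting given `C`: every non-collider on it is outside `C`
and every collider on it is in `C`. -/
def IsMConnecting (C : Set V) : {a b : V} → G.Walk a b → Prop
  | _, _, .nil => True
  | _, _, .cons _ .nil => True
  | _, _, .cons (b := m) s (.cons t w) =>
      ((s.arrowAtEnd ∧ t.arrowAtStart) ↔ m ∈ C) ∧ (Walk.cons t w).IsMConnecting C

end Walk

variable (G : MixedGraph V)

/-- `A` and `B` are m-separated given `C`: no m-connecting walk given `C`
between a vertex of `A` and a vertex of `B`. -/
def MSep (A B C : Set V) : Prop :=
  ∀ a ∈ A, ∀ b ∈ B, ∀ w : G.Walk a b, ¬ w.IsMConnecting C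

/-- `u` and `v` are joined by a pure-collider path (with at least one edge). -/
def ColliderConn (u v : V) : Prop :=
  ∃ w : G.Walk u v, 0 < w.length ∧ w.IsPureCollider

/-- Vertices connected to `S` by a (possibly empty) path of bi-directed edges. -/
def district (S : Set V) : Set V :=
  {v | ∃ s ∈ S, Relation.ReflTransGen G.bi s v}

/-- Children of vertices in `S`. -/
def ch (S : Set V) : Set V := {v | ∃ a ∈ S, G.dir a v}

/-- Ancestors of `S` (including `S` itself). -/
def an (S : Set V) : Set V :=
  {v | ∃ s ∈ S, Relation.ReflTransGen G.dir v s}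

/-- The subgraph induced by `W`: edges with both endpoints in `W`. -/
def induce (W : Set V) : MixedGraph V where
  dir a b := G.dir a b ∧ a ∈ W ∧ b ∈ W
  bi a b := G.bi a b ∧ a ∈ W ∧ b ∈ W
  bi_symm h := ⟨G.bi_symm h.1, h.2.2, h.2.1⟩

/-- Separation in an undirected graph with adjacency `adj`: every path between
`A` and `B` intersects `C`, i.e. `B` is not reachable from `A` avoiding `C`. -/
def UndirSep (adj : V → V → Prop) (A B C : Set V) : Prop :=
  ∀ a ∈ A, ∀ b ∈ B, ¬ Relation.ReflTransGen (fun x y => adj x y ∧ y ∉ C) a b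

inductive EdgeKind | fwd | bwd | bi
deriving DecidableEq

def Step.kind {G : MixedGraph V} : {a b : V} → G.Step a b → EdgeKind
  | _, _, .fwd _ => .fwd
  | _, _, .bwd _ => .bwd
  | _, _, .bi _ => .bi

def Walk.kinds {G : MixedGraph V} : {a b : V} → G.Walk a b → List EdgeKind
  | _, _, .nil => []
  | _, _, .cons s w => s.kind :: w.kinds

end MixedGraph

/-- Adjacency in the `C`-augmented, unoriented graph: `u` and `v` are joined by a
pure-collider path all of whose intermediate vertices lie in `C`
(single edges count, having no intermediate vertices). -/
def MixedGraph.augCAdj {V : Type*} (G : MixedGraph V) (C : Set V) (u v : V) : Prop :=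
  ∃ w : G.Walk u v, 0 < w.length ∧ w.IsPureCollider ∧ ∀ x ∈ w.interm, x ∈ C

/-!
Since `A ⊆ A*` and `B ⊆ B*`, one direction is monotonicity of m-separation.

Cutting an m-connecting walk at its non-colliders splits it into pure-collider paths through
`C`, i.e. edges of the augmented graph; so if its last vertex is outside `C`, it is joined to
the first one in the augmented graph avoiding `C`. Hence an m-connecting walk from `A*` to `B*`
must end in `B`, and it suffices that no vertex `y` reachable from `A` in the augmented graph
avoiding `C` is m-connected to `B`. This goes by induction along the augmented path; let
`x ⋯ y` be its last edge, a pure-collider path through `C`. As `y ∈ an(A ∪ B ∪ C)`, a directed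
path leaves `y`. If it meets `C`, going down to its first vertex in `C` (a collider in `C`) and
straight back up to `y` before following the given walk produces an m-connecting walk from `y`
to `B` that starts with a tail, and prefixing `x ⋯ y` m-connects `x` to `B`. Otherwise the
directed path ends in `A`, and reversing it m-connects `A` to `B`, or it ends in `B`, and
prefixing `x ⋯ y` to it m-connects `x` to `B`.
-/

theorem Relation.ReflTransGen.exists_until_mem {α : Type*} {r : α → α → Prop}
    {C : Set α} {y s : α} (h : Relation.ReflTransGen r y s) :
    ∃ t, Relation.ReflTransGen (fun x z => r x z ∧ x ∉ C) y t ∧ (t ∈ C ∨ t = s) := by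
  induction h using Relation.ReflTransGen.head_induction_on with
  | refl => exact ⟨s, .refl, .inr rfl⟩
  | @head y u hyu _ ih =>
    by_cases hy : y ∈ C
    · exact ⟨y, .refl, .inl hy⟩
    · obtain ⟨t, hut, ht⟩ := ih
      exact ⟨t, .head ⟨hyu, hy⟩ hut, ht⟩

namespace MixedGraph

variable {V : Type*}

def MConnected (G : MixedGraph V) (C : Set V) (x y : V) : Prop :=
  ∃ w : G.Walk x y, w.IsMConnecting C

theorem MSep.mono {G : MixedGraph V} {A B A' B' C : Set V} (h : G.MSep A' B' C)
    (hA : A ⊆ A') (hB : B ⊆ B') : G.MSep A B C :=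
  fun a ha b hb => h a (hA ha) b (hB hb)

theorem subset_an (G : MixedGraph V) (S : Set V) : S ⊆ G.an S :=
  fun s hs => ⟨s, hs, .refl⟩

theorem Step.snd_mem_of_induce {G : MixedGraph V} {M : Set V} {a b : V} :
    (G.induce M).Step a b → b ∈ M
  | .fwd h => h.2.2
  | .bwd h => h.2.1
  | .bi h => h.2.2

theorem Walk.snd_mem_of_induce {G : MixedGraph V} {M : Set V} :
    ∀ {a b : V} (w : (G.induce M).Walk a b), 0 < w.length → b ∈ M
  | _, _, .cons s .nil, _ => s.snd_mem_of_induce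
  | _, _, .cons _ (.cons t w), _ => snd_mem_of_induce (.cons t w) (Nat.succ_pos _)

theorem reflTransGen_dir_induce_an {G : MixedGraph V} {S : Set V} {y s : V} (hs : s ∈ S)
    (h : Relation.ReflTransGen G.dir y s) : Relation.ReflTransGen (G.induce (G.an S)).dir y s := by
  induction h using Relation.ReflTransGen.head_induction_on with
  | refl => exact .refl
  | head hyu hus ih => exact .head ⟨hyu, ⟨s, hs, .head hyu hus⟩, ⟨s, hs, hus⟩⟩ ih

variable {H : MixedGraph V} {C : Set V}

namespace Walk

def arrowAtStart : {a b : V} → H.Walk a b → Prop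
  | _, _, .nil => False
  | _, _, .cons s _ => s.arrowAtStart

theorem interm_cons_cons {a b c d : V} (s : H.Step a b) (t : H.Step b c) (w : H.Walk c d) :
    (cons s (cons t w)).interm = b :: (cons t w).interm := by
  cases w <;> rfl

theorem IsMConnecting.cons {a m b : V} {s : H.Step a m} {w : H.Walk m b}
    (hw : w.IsMConnecting C) (hm : s.arrowAtEnd ∧ w.arrowAtStart ↔ m ∈ C) :
    (Walk.cons s w).IsMConnecting C := by
  cases w with
  | nil => trivial
  | cons t w => exact ⟨hm, hw⟩

theorem IsPureCollider.isMConnecting_append :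
    ∀ {x y z : V} {P : H.Walk x y} {w : H.Walk y z}, P.IsPureCollider →
      (∀ v ∈ P.interm, v ∈ C) → y ∉ C → w.IsMConnecting C → ¬ w.arrowAtStart →
      (P.append w).IsMConnecting C
  | _, _, _, .nil, _, _, _, _, hw, _ => hw
  | _, _, _, .cons _ .nil, _, _, _, hy, hw, ht => hw.cons (iff_of_false (fun h => ht h.2) hy)
  | _, _, _, .cons _ (.cons t P), _, hP, hPC, hy, hw, ht => by
      rw [interm_cons_cons] at hPC
      exact ⟨iff_of_true ⟨hP.1, hP.2.1⟩ (hPC _ List.mem_cons_self),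
        isMConnecting_append (P := .cons t P) hP.2.2
          (fun v hv => hPC v (List.mem_cons_of_mem _ hv)) hy hw ht⟩

theorem IsMConnecting.exists_pureCollider_prefix :
    ∀ {x m y : V} {s : H.Step x m} {w : H.Walk m y},
      (Walk.cons s w).IsMConnecting C → y ∉ C →
      ∃ z ∉ C, ∃ P : H.Walk m z, (Walk.cons s P).IsPureCollider ∧
        (∀ v ∈ (Walk.cons s P).interm, v ∈ C) ∧
        ∃ w' : H.Walk z y, w'.IsMConnecting C ∧ w'.length < (Walk.cons s w).length
  | _, m, _, _, .nil, _, hy => ⟨m, hy, .nil, trivial, by simp [interm, verts], .nil, trivial,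
      Nat.succ_pos _⟩
  | _, m, _, _, .cons t w, hw, hy => by
      by_cases hm : m ∈ C
      · obtain ⟨z, hz, P, hP, hPC, w', hw', hlen⟩ := exists_pureCollider_prefix hw.2 hy
        refine ⟨z, hz, .cons t P, ⟨(hw.1.mpr hm).1, (hw.1.mpr hm).2, hP⟩, ?_, w', hw',
          hlen.trans (Nat.lt_succ_self _)⟩
        rw [interm_cons_cons]
        exact List.forall_mem_cons.mpr ⟨hm, hPC⟩
      · exact ⟨m, hm, .nil, trivial, by simp [interm, verts], .cons t w, hw.2,
          Nat.lt_succ_self _⟩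

theorem IsMConnecting.reflTransGen_augCAdj {x y : V} {w : H.Walk x y}
    (hw : w.IsMConnecting C) (hy : y ∉ C) :
    Relation.ReflTransGen (fun u v => H.augCAdj C u v ∧ v ∉ C) x y := by
  match w, hw with
  | .nil, _ => exact .refl
  | .cons s w, hw =>
    obtain ⟨z, hz, P, hP, hPC, w', hw', hlen⟩ := hw.exists_pureCollider_prefix hy
    exact .head ⟨⟨.cons s P, Nat.succ_pos _, hP, hPC⟩, hz⟩ (reflTransGen_augCAdj hw' hy)
termination_by w.length

end Walk

theorem MConnected.of_reflTransGen_dir {y s b : V}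
    (hys : Relation.ReflTransGen (fun x z => H.dir x z ∧ x ∉ C) y s)
    (hyb : H.MConnected C y b) : H.MConnected C s b := by
  induction hys using Relation.ReflTransGen.head_induction_on with
  | refl => exact hyb
  | head hyu _ ih =>
    obtain ⟨w, hw⟩ := hyb
    exact ih ⟨.cons (.bwd hyu.1) w, hw.cons (iff_of_false (fun h => h.1) hyu.2)⟩

theorem exists_isMConnecting_of_reflTransGen_dir {y s : V}
    (hys : Relation.ReflTransGen (fun x z => H.dir x z ∧ x ∉ C) y s) (hs : s ∉ C) :
    ∃ w : H.Walk y s, w.IsMConnecting C ∧ ¬ w.arrowAtStart := by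
  suffices y ∉ C ∧ ∃ w : H.Walk y s, w.IsMConnecting C ∧ ¬ w.arrowAtStart from this.2
  induction hys using Relation.ReflTransGen.head_induction_on with
  | refl => exact ⟨hs, .nil, trivial, id⟩
  | head hyu _ ih =>
    obtain ⟨hu, w, hw, ht⟩ := ih
    exact ⟨hyu.2, .cons (.fwd hyu.1) w, hw.cons (iff_of_false (fun h => ht h.2) hu), id⟩

theorem exists_isMConnecting_of_transGen_dir {y c b : V}
    (hyc : Relation.TransGen (fun x z => H.dir x z ∧ x ∉ C) y c) (hc : c ∈ C)
    {w : H.Walk y b} (hw : w.IsMConnecting C) :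
    ∃ w' : H.Walk y b, w'.IsMConnecting C ∧ ¬ w'.arrowAtStart := by
  suffices y ∉ C ∧ ∀ w : H.Walk y b, w.IsMConnecting C →
      ∃ w' : H.Walk y b, w'.IsMConnecting C ∧ ¬ w'.arrowAtStart from this.2 w hw
  clear hw w
  induction hyc using Relation.TransGen.head_induction_on with
  | single hyc =>
    refine ⟨hyc.2, fun w hw => ⟨.cons (.fwd hyc.1) (.cons (.bwd hyc.1) w), ?_, id⟩⟩
    exact (hw.cons (s := .bwd hyc.1) (iff_of_false (fun h => h.1) hyc.2)).cons
      (iff_of_true ⟨trivial, trivial⟩ hc)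
  | head hyu _ ih =>
    refine ⟨hyu.2, fun w hw => ?_⟩
    obtain ⟨w', hw', ht⟩ :=
      ih.2 (.cons (.bwd hyu.1) w) (hw.cons (iff_of_false (fun h => h.1) hyu.2))
    exact ⟨.cons (.fwd hyu.1) w', hw'.cons (iff_of_false (fun h => ht h.2) ih.1), id⟩

theorem not_mConnected_of_reflTransGen_augCAdj {G : MixedGraph V} {A B M : Set V}
    (hM : M = G.an (A ∪ B ∪ C)) (hsep : (G.induce M).MSep A B C) {a y : V} (ha : a ∈ A)
    (hay : Relation.ReflTransGen (fun u v => (G.induce M).augCAdj C u v ∧ v ∉ C) a y)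
    {b : V} (hb : b ∈ B) : ¬ (G.induce M).MConnected C y b := by
  subst hM
  induction hay generalizing b with
  | refl => exact fun ⟨w, hw⟩ => hsep a ha b hb w hw
  | @tail x y _ hxy ih =>
    rintro ⟨w, hw⟩
    obtain ⟨⟨P, hPlen, hP, hPC⟩, hy⟩ := hxy
    have prepend {z : V} (w : (G.induce _).Walk y z) (hw : w.IsMConnecting C)
        (ht : ¬ w.arrowAtStart) : (G.induce _).MConnected C x z :=
      ⟨P.append w, hP.isMConnecting_append hPC hy hw ht⟩
    obtain ⟨s, hs, hys⟩ := P.snd_mem_of_induce hPlen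
    obtain ⟨t, hyt, hts⟩ := (reflTransGen_dir_induce_an hs hys).exists_until_mem (C := C)
    by_cases htC : t ∈ C
    · have hyt' := (Relation.reflTransGen_iff_eq_or_transGen.mp hyt).resolve_left
        (fun h => hy (h ▸ htC))
      obtain ⟨w', hw', ht⟩ := exists_isMConnecting_of_transGen_dir hyt' htC hw
      exact ih hb (prepend w' hw' ht)
    · obtain rfl : t = s := hts.resolve_left htC
      rcases hs with (hsA | hsB) | hsC
      · obtain ⟨w', hw'⟩ := MConnected.of_reflTransGen_dir hyt ⟨w, hw⟩
        exact hsep t hsA b hb w' hw'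
      · obtain ⟨w', hw', ht⟩ := exists_isMConnecting_of_reflTransGen_dir hyt htC
        exact ih hsB (prepend w' hw' ht)
      · exact htC hsC

end MixedGraph

/-- With `M = an(A∪B∪C)`, `G_M` the induced subgraph, `A*` the vertices of `M \ (B∪C)`
connected to `A` in the `C`-augmented unoriented graph by a path avoiding `C`, and
`B* = M \ (C ∪ A*)`: `A ⊥_m B | C` in `G_M` iff `A* ⊥_m B* | C` in `G_M`. -/
theorem stmt_9 {V : Type*} (G : MixedGraph V) (A B C : Set V)
    (hAB : Disjoint A B) (hAC : Disjoint A C) (hBC : Disjoint B C)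
    (M : Set V) (hM : M = G.an (A ∪ B ∪ C))
    (Astar : Set V)
    (hAstar : Astar = {v | v ∈ M ∧ v ∉ B ∧ v ∉ C ∧
      ∃ a ∈ A, Relation.ReflTransGen
        (fun x y => (G.induce M).augCAdj C x y ∧ y ∉ C) a v})
    (Bstar : Set V) (hBstar : Bstar = M \ (C ∪ Astar)) :
    (G.induce M).MSep A B C ↔ (G.induce M).MSep Astar Bstar C := by
  subst hAstar hBstar
  refine ⟨fun hsep => ?_, fun hsep => hsep.mono (fun a ha => ?_) (fun b hb => ?_)⟩
  · rintro a ⟨-, -, -, a₀, ha₀, ha₀a⟩ b ⟨hbM, hb⟩ w hw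
    have hbC : b ∉ C := fun h => hb (.inl h)
    have hab := hw.reflTransGen_augCAdj hbC
    by_cases hbB : b ∈ B
    · exact MixedGraph.not_mConnected_of_reflTransGen_augCAdj hM hsep ha₀ ha₀a hbB ⟨w, hw⟩
    · exact hb (.inr ⟨hbM, hbB, hbC, a₀, ha₀, ha₀a.trans hab⟩)
  · exact ⟨hM ▸ G.subset_an _ (.inl (.inl ha)), hAB.notMem_of_mem_left ha,
      hAC.notMem_of_mem_left ha, a, ha, .refl⟩
  · exact ⟨hM ▸ G.subset_an _ (.inl (.inr hb)),
      fun h => h.elim (hBC.notMem_of_mem_left hb) fun hbA => hbA.2.1 hb⟩
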